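/- For any fat set A in a group G and any positive integer n, there exists a positive integer m such that every m-element subset F of G contains an n-element subset F' with F'⁻¹F' ⊆ A. -/

import Mathlib

open Pointwise

def IsFatWith {G : Type*} [Group G] (m : ℕ) (A : Set G) : Prop :=
  ∀ F : Finset G, F.card = m →
    ∃ D : Finset G, D ⊆ F ∧ D.card = 2 ∧ (D : Set G)⁻¹ * (D : Set G) ⊆ A

def IsFat {G : Type*} [Group G] (A : Set G) : Prop :=
  ∃ k : ℕ, IsFatWith k A

/-!
Join two distinct elements `x, y` of `G` by an edge when both `x⁻¹ * y` and `y⁻¹ * x` lie in `A`.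
Fatness of `A` with constant `k` says that this graph has no independent set of size `k`, so by the
finite Ramsey theorem every large enough finite set contains an `n`-clique `F'`, and then
`F'⁻¹ * F' ⊆ A` (the diagonal products are `1`, which lies in `A` because `D⁻¹ * D ∋ 1`).
-/

open Finset

namespace SimpleGraph

def IsRamseyBound (V : Type*) (a b m : ℕ) : Prop :=
  ∀ (G : SimpleGraph V) (F : Finset V), m ≤ #F → ∃ C ⊆ F, Gᶜ.IsNClique a C ∨ G.IsNClique b C

variable {V : Type*}

theorem IsRamseyBound.swap {a b m : ℕ} (h : IsRamseyBound V a b m) : IsRamseyBound V b a m := by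
  intro G F hF
  simpa only [compl_compl, or_comm] using h Gᶜ F hF

theorem IsRamseyBound.exists_of_adj [DecidableEq V] {a b m : ℕ}
    (h : IsRamseyBound V (a + 1) b m) (G : SimpleGraph V) (x : V) (N : Finset V)
    (hN : ∀ y ∈ N, G.Adj x y) (hm : m ≤ #N) :
    ∃ C ⊆ insert x N, Gᶜ.IsNClique (a + 1) C ∨ G.IsNClique (b + 1) C := by
  obtain ⟨C, hCN, hC | hC⟩ := h G N hm
  · exact ⟨C, hCN.trans (subset_insert x N), .inl hC⟩
  · exact ⟨insert x C, insert_subset_insert x hCN, .inr (hC.insert fun y hy => hN y (hCN hy))⟩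

theorem IsRamseyBound.succ_succ {a b m₁ m₂ : ℕ} (h₁ : IsRamseyBound V a (b + 1) m₁)
    (h₂ : IsRamseyBound V (a + 1) b m₂) : IsRamseyBound V (a + 1) (b + 1) (m₁ + m₂ + 1) := by
  classical
  intro G F hF
  obtain ⟨x, hx⟩ : F.Nonempty := card_pos.mp (by omega)
  set N := (F.erase x).filter (G.Adj x)
  set M := (F.erase x).filter (Gᶜ.Adj x)
  have hsplit : #N + #M + 1 = #F := by
    have hcompl : M = (F.erase x).filter (¬ G.Adj x ·) :=
      filter_congr fun y hy => by simp [compl_adj, (ne_of_mem_erase hy).symm]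
    rw [hcompl, card_filter_add_card_filter_not, card_erase_add_one hx]
  have hsub : ∀ p : V → Prop, [DecidablePred p] → insert x ((F.erase x).filter p) ⊆ F :=
    fun p _ => insert_subset hx ((filter_subset _ _).trans (erase_subset x F))
  by_cases hm : m₂ ≤ #N
  · obtain ⟨C, hC, hclique⟩ := h₂.exists_of_adj G x N (fun y hy => (mem_filter.mp hy).2) hm
    exact ⟨C, hC.trans (hsub _), hclique⟩
  · -- the non-neighbours of `x` are its neighbours in `Gᶜ`, where the roles of `a, b` swap
    obtain ⟨C, hC, hclique⟩ :=
      h₁.swap.exists_of_adj Gᶜ x M (fun y hy => (mem_filter.mp hy).2) (by omega)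
    rw [compl_compl, or_comm] at hclique
    exact ⟨C, hC.trans (hsub _), hclique⟩

theorem exists_isRamseyBound (a b : ℕ) : ∃ m, IsRamseyBound V a b m := by
  induction a generalizing b with
  | zero => exact ⟨0, fun G F _ => ⟨∅, empty_subset F, .inl (isNClique_zero.mpr rfl)⟩⟩
  | succ a iha =>
    induction b with
    | zero => exact ⟨0, fun G F _ => ⟨∅, empty_subset F, .inr (isNClique_zero.mpr rfl)⟩⟩
    | succ b ihb =>
      obtain ⟨m₁, h₁⟩ := iha (b + 1)
      obtain ⟨m₂, h₂⟩ := ihb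
      exact ⟨m₁ + m₂ + 1, h₁.succ_succ h₂⟩

end SimpleGraph

section Group

variable {G : Type*} [Group G]

def differenceGraph (A : Set G) : SimpleGraph G where
  Adj x y := x ≠ y ∧ x⁻¹ * y ∈ A ∧ y⁻¹ * x ∈ A
  symm := ⟨fun _ _ h => ⟨h.1.symm, h.2.2, h.2.1⟩⟩
  loopless := ⟨fun _ h => h.1 rfl⟩

@[simp]
theorem differenceGraph_adj {A : Set G} {x y : G} :
    (differenceGraph A).Adj x y ↔ x ≠ y ∧ x⁻¹ * y ∈ A ∧ y⁻¹ * x ∈ A :=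
  Iff.rfl

theorem inv_mul_subset_of_isClique_differenceGraph {A : Set G} (hA : 1 ∈ A) {C : Set G}
    (hC : (differenceGraph A).IsClique C) : C⁻¹ * C ⊆ A := by
  rintro _ ⟨u, hu, v, hv, rfl⟩
  rw [Set.mem_inv] at hu
  by_cases huv : u⁻¹ = v
  · simpa [← huv] using hA
  · simpa using (differenceGraph_adj.mp (hC hu hv huv)).2.1

variable {k : ℕ} {A : Set G}

theorem IsFatWith.one_mem (hA : IsFatWith k A) (F : Finset G) (hF : k ≤ #F) : 1 ∈ A := by
  obtain ⟨K, -, hK⟩ := exists_subset_card_eq hF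
  obtain ⟨D, -, hD, hDA⟩ := hA K hK
  obtain ⟨d, hd⟩ : D.Nonempty := card_pos.mp (by omega)
  exact hDA ⟨d⁻¹, by simpa using hd, d, hd, inv_mul_cancel d⟩

theorem IsFatWith.not_isNClique_compl (hA : IsFatWith k A) (C : Finset G) :
    ¬ (differenceGraph A)ᶜ.IsNClique k C := by
  classical
  intro hC
  obtain ⟨D, hDC, hD, hDA⟩ := hA C hC.card_eq
  obtain ⟨u, v, huv, rfl⟩ := card_eq_two.mp hD
  have hu : u ∈ ({u, v} : Finset G) := mem_insert_self u {v}
  have hv : v ∈ ({u, v} : Finset G) := mem_insert_of_mem (mem_singleton_self v)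
  refine (hC.isClique (hDC hu) (hDC hv) huv).2 (differenceGraph_adj.mpr ⟨huv, ?_, ?_⟩)
  · exact hDA ⟨u⁻¹, Set.inv_mem_inv.mpr hu, v, hv, rfl⟩
  · exact hDA ⟨v⁻¹, Set.inv_mem_inv.mpr hv, u, hu, rfl⟩

end Group

theorem stmt8_general {G : Type*} [Group G] (A : Set G) (hA : IsFat A)
    (n : ℕ) :
    ∃ m : ℕ, 0 < m ∧ ∀ F : Finset G, F.card = m →
      ∃ F' : Finset G, F' ⊆ F ∧ F'.card = n ∧
        (F' : Set G)⁻¹ * (F' : Set G) ⊆ A := by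
  obtain ⟨k, hk⟩ := hA
  obtain ⟨m, hm⟩ := SimpleGraph.exists_isRamseyBound (V := G) k n
  refine ⟨m + k + 1, by omega, fun F hF => ?_⟩
  obtain ⟨C, hCF, hC | hC⟩ := hm (differenceGraph A) F (by omega)
  · exact (hk.not_isNClique_compl C hC).elim
  · have hone : 1 ∈ A := hk.one_mem F (by omega)
    exact ⟨C, hCF, hC.card_eq, inv_mul_subset_of_isClique_differenceGraph hone hC.isClique⟩

theorem stmt8 {G : Type*} [Group G] (A : Set G) (hA : IsFat A)
    (n : ℕ) (hn : 0 < n) :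
    ∃ m : ℕ, 0 < m ∧ ∀ F : Finset G, F.card = m →
      ∃ F' : Finset G, F' ⊆ F ∧ F'.card = n ∧
        (F' : Set G)⁻¹ * (F' : Set G) ⊆ A :=
  stmt8_general A hA n
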